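/- If f is adaptive monotone and adaptive submodular, and the randomized policy π^ag is an expected α_i-approximate greedy policy at each round i = 1,...,r, then E_ω[f_avg(π^ag(ω))] ≥ (1 − e^{−α}) · E_ω[f_avg(π*(ω))] for every randomized policy π* selecting at most r items, where α = (1/r)Σ_{i=1}^r α_i. -/

import Mathlib

open Finset
open scoped Classical

section Adaptive

variable {E O : Type*} [Fintype E] [Fintype O] [DecidableEq E] [Nonempty E]

/-- A partial realization: a partial assignment of states to items. -/
abbrev PReal (E O : Type*) := E → Option O

/-- A (full) realization `φ` is consistent with a partial realization `ψ`
(written `φ ∼ ψ`) if `φ` agrees with `ψ` on the domain of `ψ`. -/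
def consistentR (φ : E → O) (ψ : PReal E O) : Prop := ∀ e o, ψ e = some o → φ e = o

/-- The domain of a partial realization, i.e. the set of items already selected. -/
noncomputable def pdom (ψ : PReal E O) : Finset E :=
  Finset.univ.filter fun e => (ψ e).isSome

/-- The probability `Pr[Φ ∼ ψ]` that the random realization is consistent with `ψ`. -/
noncomputable def prMass (p : (E → O) → ℝ) (ψ : PReal E O) : ℝ :=
  ∑ φ ∈ Finset.univ.filter (fun φ => consistentR φ ψ), p φ

/-- The conditional expected marginal benefit `Δ(e | ψ)` of item `e` given the
partial realization `ψ`. -/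
noncomputable def marginal (p : (E → O) → ℝ) (f : Finset E → (E → O) → ℝ)
    (e : E) (ψ : PReal E O) : ℝ :=
  (∑ φ ∈ Finset.univ.filter (fun φ => consistentR φ ψ),
      p φ * (f (insert e (pdom ψ)) φ - f (pdom ψ) φ)) / prMass p ψ

/-- `max_e Δ(e | ψ)`, the best single-item conditional marginal benefit. -/
noncomputable def maxMarginal (p : (E → O) → ℝ) (f : Finset E → (E → O) → ℝ)
    (ψ : PReal E O) : ℝ :=
  Finset.univ.sup' Finset.univ_nonempty (fun e => marginal p f e ψ)

/-- Adaptive monotonicity: `Δ(e | ψ) ≥ 0` for every `e` and every `ψ` with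
`Pr[Φ ∼ ψ] > 0`. -/
def AdaptiveMonotone (p : (E → O) → ℝ) (f : Finset E → (E → O) → ℝ) : Prop :=
  ∀ ψ : PReal E O, 0 < prMass p ψ → ∀ e : E, 0 ≤ marginal p f e ψ

/-- `ψ` is a subrealization of `ψ'`. -/
def subreal (ψ ψ' : PReal E O) : Prop := ∀ e o, ψ e = some o → ψ' e = some o

/-- Adaptive submodularity: `Δ(e | ψ) ≥ Δ(e | ψ')` whenever `ψ ⊆ ψ'` and
`e ∉ dom(ψ')`. -/
def AdaptiveSubmodular (p : (E → O) → ℝ) (f : Finset E → (E → O) → ℝ) : Prop :=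
  ∀ ψ ψ' : PReal E O, subreal ψ ψ' → ∀ e ∉ pdom ψ', marginal p f e ψ' ≤ marginal p f e ψ

/-- A deterministic adaptive policy: picks the next item from the current
partial realization. -/
abbrev Policy (E O : Type*) := PReal E O → E

/-- `runP π φ i = Ψ_i(π, φ)`: the partial realization observed after policy `π`
selects its first `i` items under realization `φ`. -/
noncomputable def runP (π : Policy E O) (φ : E → O) : ℕ → PReal E O
  | 0 => fun _ => none
  | (i + 1) =>
      Function.update (runP π φ i) (π (runP π φ i)) (some (φ (π (runP π φ i))))

/-- `favg p f π i = f_avg(π_i)`: the expected utility of the truncated policy `π_i`. -/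
noncomputable def favg (p : (E → O) → ℝ) (f : Finset E → (E → O) → ℝ)
    (π : Policy E O) (i : ℕ) : ℝ :=
  ∑ φ : E → O, p φ * f (pdom (runP π φ i)) φ

end Adaptive

/-!
The Golovin–Krause argument, averaged over the internal randomness. Let `A_i` be the expected
utility of the first `i` rounds of `π^ag`, `B` that of `π*`, and `M_i` the expected best
one-step gain `E[max_e Δ(e | Ψ_i)]` after `i` greedy rounds. Running `π*` after `π^ag_i`, without
using what was seen, can only help (adaptive monotonicity), and each of its `r` items gains at
most `max_e Δ(e | Ψ_i)` (adaptive submodularity), so `B ≤ A_i + r M_i`. Grouping the seeds by the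
observed history, the expected greedy hypothesis gives `A_i - A_{i-1} ≥ α_i M_{i-1}`. Hence the
gap `B - A_i` shrinks by the factor `1 - α_i / r ≤ exp (-α_i / r)` in round `i`.
-/

section Realizations

variable {E O : Type*}

theorem consistentR_of_subreal {φ : E → O} {ψ ψ' : PReal E O} (h : subreal ψ ψ')
    (hφ : consistentR φ ψ') : consistentR φ ψ :=
  fun e o he => hφ e o (h e o he)

def punion (ψ ψ' : PReal E O) : PReal E O := fun e => (ψ e).or (ψ' e)

theorem subreal_punion_left (ψ ψ' : PReal E O) : subreal ψ (punion ψ ψ') := by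
  intro e o h
  simp [punion, h]

theorem subreal_punion_right {φ : E → O} {ψ ψ' : PReal E O} (hψ : consistentR φ ψ)
    (hψ' : consistentR φ ψ') : subreal ψ' (punion ψ ψ') := by
  intro e o h
  cases he : ψ e with
  | none => simp [punion, he, h]
  | some o' => simp [punion, he, ← hψ e o' he, hψ' e o h]

theorem consistentR_punion {φ : E → O} {ψ ψ' : PReal E O} (hψ : consistentR φ ψ)
    (hψ' : consistentR φ ψ') : consistentR φ (punion ψ ψ') := by
  intro e o h
  cases he : ψ e with
  | none => exact hψ' e o (by simpa [punion, he] using h)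
  | some o' =>
    simp only [punion, he, Option.some_or, Option.some_inj] at h
    exact h ▸ hψ e o' he

theorem pdom_punion [Fintype E] [DecidableEq E] (ψ ψ' : PReal E O) :
    pdom (punion ψ ψ') = pdom ψ ∪ pdom ψ' := by
  ext e
  simp [pdom, punion]

theorem pdom_update [Fintype E] [DecidableEq E] (ψ : PReal E O) (e : E) (o : O) :
    pdom (Function.update ψ e (some o)) = insert e (pdom ψ) := by
  ext x
  rcases eq_or_ne x e with rfl | hx
  · simp [pdom]
  · simp [pdom, hx]

end Realizations

section Runs

variable {E O : Type*} [DecidableEq E]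

theorem runP_consistent (π : Policy E O) (φ : E → O) : ∀ i, consistentR φ (runP π φ i)
  | 0 => fun e o h => by simp [runP] at h
  | i + 1 => by
    intro e o h
    rw [runP] at h
    rcases eq_or_ne e (π (runP π φ i)) with rfl | he
    · simpa using h
    · exact runP_consistent π φ i e o (by rwa [Function.update_of_ne he] at h)

theorem runP_subreal_succ (π : Policy E O) (φ : E → O) (i : ℕ) :
    subreal (runP π φ i) (runP π φ (i + 1)) := by
  intro e o h
  rw [runP]
  rcases eq_or_ne e (π (runP π φ i)) with rfl | he
  · simp [runP_consistent π φ i _ o h]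
  · rwa [Function.update_of_ne he]

theorem runP_eq_of_consistentR (π : Policy E O) {φ φ' : E → O} :
    ∀ i, consistentR φ' (runP π φ i) → runP π φ' i = runP π φ i
  | 0, _ => rfl
  | i + 1, h => by
    have hi := runP_eq_of_consistentR π i
      (consistentR_of_subreal (runP_subreal_succ π φ i) h)
    have hsel : φ' (π (runP π φ i)) = φ (π (runP π φ i)) :=
      h _ _ (by rw [runP, Function.update_self])
    rw [runP, runP, hi, hsel]

theorem pdom_runP_zero [Fintype E] (π : Policy E O) (φ : E → O) : pdom (runP π φ 0) = ∅ := by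
  simp [pdom, runP]

theorem pdom_runP_succ [Fintype E] (π : Policy E O) (φ : E → O) (i : ℕ) :
    pdom (runP π φ (i + 1)) = insert (π (runP π φ i)) (pdom (runP π φ i)) :=
  pdom_update _ _ _

end Runs

section Marginals

variable {E O : Type*} [Fintype E] [Fintype O] [DecidableEq E] {p : (E → O) → ℝ}

theorem prMass_nonneg (hp : ∀ φ, 0 ≤ p φ) (ψ : PReal E O) : 0 ≤ prMass p ψ :=
  sum_nonneg fun φ _ => hp φ

theorem prMass_mono (hp : ∀ φ, 0 ≤ p φ) {ψ ψ' : PReal E O} (h : subreal ψ ψ') :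
    prMass p ψ' ≤ prMass p ψ :=
  sum_le_sum_of_subset_of_nonneg
    (fun φ hφ => by simpa using consistentR_of_subreal h (by simpa using hφ))
    fun φ _ _ => hp φ

theorem prMass_pos_of_consistentR (hp : ∀ φ, 0 ≤ p φ) {φ : E → O} {ψ : PReal E O}
    (hφ : consistentR φ ψ) (hpφ : 0 < p φ) : 0 < prMass p ψ :=
  hpφ.trans_le (single_le_sum (fun φ _ => hp φ) (by simpa using hφ))

theorem prMass_mul_marginal (hp : ∀ φ, 0 ≤ p φ) (f : Finset E → (E → O) → ℝ) (e : E)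
    (ψ : PReal E O) :
    prMass p ψ * marginal p f e ψ
      = ∑ φ ∈ univ.filter (fun φ => consistentR φ ψ),
          p φ * (f (insert e (pdom ψ)) φ - f (pdom ψ) φ) := by
  rcases (prMass_nonneg hp ψ).eq_or_lt with h0 | hpos
  · have hp0 := (sum_eq_zero_iff_of_nonneg fun φ _ => hp φ).1 h0.symm
    rw [← h0, zero_mul]
    exact (sum_eq_zero fun φ hφ => by rw [hp0 φ hφ, zero_mul]).symm
  · rw [marginal, mul_div_cancel₀ _ hpos.ne']

theorem marginal_eq_zero_of_mem (f : Finset E → (E → O) → ℝ) {e : E} {ψ : PReal E O}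
    (he : e ∈ pdom ψ) : marginal p f e ψ = 0 := by
  simp [marginal, insert_eq_of_mem he]

theorem mul_marginal_nonneg (hp : ∀ φ, 0 ≤ p φ) {f : Finset E → (E → O) → ℝ}
    (hmono : AdaptiveMonotone p f) {φ : E → O} {ψ : PReal E O} (hφ : consistentR φ ψ) (e : E) :
    0 ≤ p φ * marginal p f e ψ := by
  rcases (hp φ).eq_or_lt with h0 | hpos
  · simp [← h0]
  · exact mul_nonneg hpos.le (hmono ψ (prMass_pos_of_consistentR hp hφ hpos) e)

variable [Nonempty E] {f : Finset E → (E → O) → ℝ}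

theorem marginal_le_maxMarginal (e : E) (ψ : PReal E O) :
    marginal p f e ψ ≤ maxMarginal p f ψ :=
  le_sup' (fun e => marginal p f e ψ) (mem_univ e)

theorem maxMarginal_nonneg (hmono : AdaptiveMonotone p f) {ψ : PReal E O}
    (hψ : 0 < prMass p ψ) : 0 ≤ maxMarginal p f ψ :=
  (hmono ψ hψ (Classical.arbitrary E)).trans (marginal_le_maxMarginal _ ψ)

theorem mul_marginal_le_mul_maxMarginal (hp : ∀ φ, 0 ≤ p φ) (hmono : AdaptiveMonotone p f)
    (hsub : AdaptiveSubmodular p f) {φ : E → O} {ψ ψ' : PReal E O} (hψ : subreal ψ ψ')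
    (hφ : consistentR φ ψ') (e : E) :
    p φ * marginal p f e ψ' ≤ p φ * maxMarginal p f ψ := by
  rcases (hp φ).eq_or_lt with h0 | hpos
  · simp [← h0]
  refine mul_le_mul_of_nonneg_left ?_ hpos.le
  by_cases he : e ∈ pdom ψ'
  · rw [marginal_eq_zero_of_mem f he]
    exact maxMarginal_nonneg hmono
      ((prMass_pos_of_consistentR hp hφ hpos).trans_le (prMass_mono hp hψ))
  · exact (hsub ψ ψ' hψ e he).trans (marginal_le_maxMarginal e ψ)

end Marginals

section Observations

variable {E O : Type*}

/-- `g φ` is what an adaptive procedure has observed under the realization `φ`: it is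
consistent with `φ`, and any realization consistent with it leads to the same observation. -/
structure IsObservation (g : (E → O) → PReal E O) : Prop where
  consistent : ∀ φ, consistentR φ (g φ)
  eq_of_consistent : ∀ {φ φ'}, consistentR φ' (g φ) → g φ' = g φ

theorem isObservation_runP [DecidableEq E] (π : Policy E O) (i : ℕ) :
    IsObservation fun φ => runP π φ i :=
  ⟨fun φ => runP_consistent π φ i, fun h => runP_eq_of_consistentR π i h⟩

namespace IsObservation

variable {g h : (E → O) → PReal E O}

theorem punion (hg : IsObservation g) (hh : IsObservation h) :
    IsObservation fun φ => punion (g φ) (h φ) where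
  consistent φ := consistentR_punion (hg.consistent φ) (hh.consistent φ)
  eq_of_consistent {φ _} hφ' := by
    rw [hg.eq_of_consistent (consistentR_of_subreal (subreal_punion_left _ _) hφ'),
      hh.eq_of_consistent (consistentR_of_subreal
        (subreal_punion_right (hg.consistent φ) (hh.consistent φ)) hφ')]

variable [Fintype E] [Fintype O] [DecidableEq E]

theorem filter_eq (hg : IsObservation g) (φ₀ : E → O) :
    univ.filter (fun φ => g φ = g φ₀) = univ.filter (fun φ => consistentR φ (g φ₀)) := by
  ext φ
  simp only [mem_filter, mem_univ, true_and]
  exact ⟨fun h => h ▸ hg.consistent φ, hg.eq_of_consistent⟩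

theorem sum_eq_sum_of_forall_sum_consistentR_eq (hg : IsObservation g) {F G : (E → O) → ℝ}
    (h : ∀ φ₀, ∑ φ ∈ univ.filter (fun φ => consistentR φ (g φ₀)), F φ
      = ∑ φ ∈ univ.filter (fun φ => consistentR φ (g φ₀)), G φ) :
    ∑ φ, F φ = ∑ φ, G φ := by
  rw [← sum_fiberwise_of_maps_to (t := univ.image g) (fun φ _ => mem_image_of_mem g (mem_univ φ)),
    ← sum_fiberwise_of_maps_to (t := univ.image g) (fun φ _ => mem_image_of_mem g (mem_univ φ))]
  refine sum_congr rfl fun ψ hψ => ?_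
  obtain ⟨φ₀, -, rfl⟩ := mem_image.1 hψ
  rw [hg.filter_eq]
  exact h φ₀

/-- The tower property for the conditional expectations `Δ(· | g φ)`. -/
theorem sum_mul_marginal (hg : IsObservation g) {p : (E → O) → ℝ} (hp : ∀ φ, 0 ≤ p φ)
    (f : Finset E → (E → O) → ℝ) {sel : (E → O) → E}
    (hsel : ∀ {φ φ'}, consistentR φ' (g φ) → sel φ' = sel φ) :
    ∑ φ, p φ * marginal p f (sel φ) (g φ)
      = ∑ φ, p φ * (f (insert (sel φ) (pdom (g φ))) φ - f (pdom (g φ)) φ) := by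
  refine hg.sum_eq_sum_of_forall_sum_consistentR_eq fun φ₀ => ?_
  have hconst : ∀ φ ∈ univ.filter (fun φ => consistentR φ (g φ₀)),
      g φ = g φ₀ ∧ sel φ = sel φ₀ := fun φ hφ => by
    have hφ : consistentR φ (g φ₀) := (mem_filter.1 hφ).2
    exact ⟨hg.eq_of_consistent hφ, hsel hφ⟩
  calc ∑ φ ∈ univ.filter (fun φ => consistentR φ (g φ₀)), p φ * marginal p f (sel φ) (g φ)
      = prMass p (g φ₀) * marginal p f (sel φ₀) (g φ₀) := by
        rw [prMass, sum_mul]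
        exact sum_congr rfl fun φ hφ => by rw [(hconst φ hφ).1, (hconst φ hφ).2]
    _ = _ := by
        rw [prMass_mul_marginal hp]
        exact sum_congr rfl fun φ hφ => by rw [(hconst φ hφ).1, (hconst φ hφ).2]

end IsObservation

theorem isObservation_punion_runP [DecidableEq E] (π π' : Policy E O) (i j : ℕ) :
    IsObservation fun φ => punion (runP π φ i) (runP π' φ j) :=
  (isObservation_runP π i).punion (isObservation_runP π' j)

end Observations

section Policies

variable {E O : Type*} [Fintype E] [Fintype O] [DecidableEq E] {p : (E → O) → ℝ}
  {f : Finset E → (E → O) → ℝ}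

theorem favg_nonneg (hp : ∀ φ, 0 ≤ p φ) (hf : ∀ S φ, 0 ≤ f S φ) (π : Policy E O) (i : ℕ) :
    0 ≤ favg p f π i :=
  sum_nonneg fun φ _ => mul_nonneg (hp φ) (hf _ φ)

theorem favg_succ_sub (hp : ∀ φ, 0 ≤ p φ) (π : Policy E O) (i : ℕ) :
    favg p f π (i + 1) - favg p f π i
      = ∑ φ, p φ * marginal p f (π (runP π φ i)) (runP π φ i) := by
  have hobs := isObservation_runP π i
  rw [hobs.sum_mul_marginal hp f fun h => by rw [hobs.eq_of_consistent h], favg, favg,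
    ← sum_sub_distrib]
  exact sum_congr rfl fun φ _ => by rw [pdom_runP_succ, mul_sub]

/-- The expected utility of the concatenated policy `π @ π'` that runs `π` for `i` steps and
then, ignoring what it has seen, `π'` for `j` steps. -/
noncomputable def favgConcat (p : (E → O) → ℝ) (f : Finset E → (E → O) → ℝ)
    (π π' : Policy E O) (i j : ℕ) : ℝ :=
  ∑ φ, p φ * f (pdom (runP π φ i) ∪ pdom (runP π' φ j)) φ

theorem favgConcat_zero_left (π π' : Policy E O) (j : ℕ) :
    favgConcat p f π π' 0 j = favg p f π' j := by
  simp [favgConcat, favg, pdom_runP_zero]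

theorem favgConcat_zero_right (π π' : Policy E O) (i : ℕ) :
    favgConcat p f π π' i 0 = favg p f π i := by
  simp [favgConcat, favg, pdom_runP_zero]

theorem favgConcat_succ_left_sub (hp : ∀ φ, 0 ≤ p φ) (π π' : Policy E O) (i j : ℕ) :
    favgConcat p f π π' (i + 1) j - favgConcat p f π π' i j
      = ∑ φ, p φ * marginal p f (π (runP π φ i)) (punion (runP π φ i) (runP π' φ j)) := by
  rw [(isObservation_punion_runP π π' i j).sum_mul_marginal hp f fun h => by
      rw [(isObservation_runP π i).eq_of_consistent
        (consistentR_of_subreal (subreal_punion_left _ _) h)],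
    favgConcat, favgConcat, ← sum_sub_distrib]
  exact sum_congr rfl fun φ _ => by rw [pdom_runP_succ, pdom_punion, insert_union, mul_sub]

theorem favgConcat_succ_right_sub (hp : ∀ φ, 0 ≤ p φ) (π π' : Policy E O) (i j : ℕ) :
    favgConcat p f π π' i (j + 1) - favgConcat p f π π' i j
      = ∑ φ, p φ * marginal p f (π' (runP π' φ j)) (punion (runP π φ i) (runP π' φ j)) := by
  rw [(isObservation_punion_runP π π' i j).sum_mul_marginal hp f fun {φ _} h => by
      rw [(isObservation_runP π' j).eq_of_consistent (consistentR_of_subreal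
        (subreal_punion_right (runP_consistent π φ i) (runP_consistent π' φ j)) h)],
    favgConcat, favgConcat, ← sum_sub_distrib]
  exact sum_congr rfl fun φ _ => by rw [pdom_runP_succ, pdom_punion, union_insert, mul_sub]

theorem favgConcat_le_succ_left (hp : ∀ φ, 0 ≤ p φ) (hmono : AdaptiveMonotone p f)
    (π π' : Policy E O) (i j : ℕ) :
    favgConcat p f π π' i j ≤ favgConcat p f π π' (i + 1) j := by
  rw [← sub_nonneg, favgConcat_succ_left_sub hp]
  exact sum_nonneg fun φ _ =>
    mul_marginal_nonneg hp hmono ((isObservation_punion_runP π π' i j).consistent φ) _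

variable [Nonempty E]

noncomputable def avgMaxMarginal (p : (E → O) → ℝ) (f : Finset E → (E → O) → ℝ)
    (π : Policy E O) (i : ℕ) : ℝ :=
  ∑ φ, p φ * maxMarginal p f (runP π φ i)

theorem favgConcat_succ_right_le (hp : ∀ φ, 0 ≤ p φ) (hmono : AdaptiveMonotone p f)
    (hsub : AdaptiveSubmodular p f) (π π' : Policy E O) (i j : ℕ) :
    favgConcat p f π π' i (j + 1) ≤ favgConcat p f π π' i j + avgMaxMarginal p f π i := by
  rw [← sub_le_iff_le_add', favgConcat_succ_right_sub hp]
  exact sum_le_sum fun φ _ => mul_marginal_le_mul_maxMarginal hp hmono hsub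
    (subreal_punion_left _ _) ((isObservation_punion_runP π π' i j).consistent φ) _

theorem favg_le_favg_add_mul_avgMaxMarginal (hp : ∀ φ, 0 ≤ p φ) (hmono : AdaptiveMonotone p f)
    (hsub : AdaptiveSubmodular p f) (π π' : Policy E O) (i n : ℕ) :
    favg p f π' n ≤ favg p f π i + n * avgMaxMarginal p f π i := by
  have hleft : favgConcat p f π π' 0 n ≤ favgConcat p f π π' i n :=
    monotone_nat_of_le_succ (fun k => favgConcat_le_succ_left hp hmono π π' k n) (Nat.zero_le i)
  have hright : ∀ k, favgConcat p f π π' i k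
      ≤ favgConcat p f π π' i 0 + k * avgMaxMarginal p f π i := by
    intro k
    induction k with
    | zero => simp
    | succ k ih =>
      have := favgConcat_succ_right_le hp hmono hsub π π' i k
      push_cast
      linarith
  rw [← favgConcat_zero_left π, ← favgConcat_zero_right π π']
  exact hleft.trans (hright n)

end Policies

section RandomizedPolicies

variable {E O : Type*} [Fintype E] [Fintype O] [DecidableEq E] [Nonempty E]
  {p : (E → O) → ℝ} {f : Finset E → (E → O) → ℝ} {Ω : Type*} [Fintype Ω]

/-- Group the seeds `ω` by the history `ψ` they produce under `φ`. -/
theorem sum_mul_maxMarginal_le_of_greedy (q : Ω → ℝ) (P : Ω → Policy E O) (j : ℕ) (a : ℝ)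
    (φ : E → O)
    (hgreedy : ∀ ψ : PReal E O,
      a * maxMarginal p f ψ * (∑ ω ∈ univ.filter (fun ω => runP (P ω) φ j = ψ), q ω)
        ≤ ∑ ω ∈ univ.filter (fun ω => runP (P ω) φ j = ψ), q ω * marginal p f (P ω ψ) ψ) :
    a * ∑ ω, q ω * maxMarginal p f (runP (P ω) φ j)
      ≤ ∑ ω, q ω * marginal p f (P ω (runP (P ω) φ j)) (runP (P ω) φ j) := by
  rw [← sum_fiberwise univ (fun ω => runP (P ω) φ j),
    ← sum_fiberwise univ (fun ω => runP (P ω) φ j), mul_sum]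
  refine sum_le_sum fun ψ _ => ?_
  calc a * ∑ ω ∈ univ.filter (fun ω => runP (P ω) φ j = ψ), q ω * maxMarginal p f (runP (P ω) φ j)
      = a * maxMarginal p f ψ * ∑ ω ∈ univ.filter (fun ω => runP (P ω) φ j = ψ), q ω := by
        rw [mul_assoc, mul_sum _ _ (maxMarginal p f ψ)]
        exact congrArg _ (sum_congr rfl fun ω hω => by rw [(mem_filter.1 hω).2, mul_comm])
    _ ≤ _ := hgreedy ψ
    _ = _ := sum_congr rfl fun ω hω => by rw [(mem_filter.1 hω).2]

theorem mul_sum_avgMaxMarginal_le_of_greedy (hp : ∀ φ, 0 ≤ p φ) (q : Ω → ℝ)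
    (P : Ω → Policy E O) (j : ℕ) (a : ℝ)
    (hgreedy : ∀ (φ : E → O) (ψ : PReal E O),
      a * maxMarginal p f ψ * (∑ ω ∈ univ.filter (fun ω => runP (P ω) φ j = ψ), q ω)
        ≤ ∑ ω ∈ univ.filter (fun ω => runP (P ω) φ j = ψ), q ω * marginal p f (P ω ψ) ψ) :
    a * ∑ ω, q ω * avgMaxMarginal p f (P ω) j
      ≤ ∑ ω, q ω * favg p f (P ω) (j + 1) - ∑ ω, q ω * favg p f (P ω) j :=
  calc a * ∑ ω, q ω * avgMaxMarginal p f (P ω) j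
      = ∑ φ, p φ * (a * ∑ ω, q ω * maxMarginal p f (runP (P ω) φ j)) := by
        simp only [avgMaxMarginal, mul_sum]
        rw [sum_comm]
        exact sum_congr rfl fun _ _ => sum_congr rfl fun _ _ => by ring
    _ ≤ ∑ φ, p φ * ∑ ω, q ω * marginal p f (P ω (runP (P ω) φ j)) (runP (P ω) φ j) :=
        sum_le_sum fun φ _ => mul_le_mul_of_nonneg_left
          (sum_mul_maxMarginal_le_of_greedy q P j a φ (hgreedy φ)) (hp φ)
    _ = ∑ ω, q ω * (favg p f (P ω) (j + 1) - favg p f (P ω) j) := by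
        simp only [favg_succ_sub hp, mul_sum]
        rw [sum_comm]
        exact sum_congr rfl fun _ _ => sum_congr rfl fun _ _ => by ring
    _ = _ := by simp only [mul_sub, sum_sub_distrib]

end RandomizedPolicies

theorem sum_mul_le_sum_mul_of_forall_le {ι κ : Type*} [Fintype ι] [Fintype κ] {q : ι → ℝ}
    {q' : κ → ℝ} (hq : ∀ i, 0 ≤ q i) (hq1 : ∑ i, q i = 1) (hq' : ∀ k, 0 ≤ q' k)
    (hq'1 : ∑ k, q' k = 1) {x : κ → ℝ} {y : ι → ℝ} (h : ∀ i k, x k ≤ y i) :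
    ∑ k, q' k * x k ≤ ∑ i, q i * y i :=
  calc ∑ k, q' k * x k = ∑ i, q i * ∑ k, q' k * x k := by rw [← sum_mul, hq1, one_mul]
    _ ≤ ∑ i, q i * y i := sum_le_sum fun i _ => mul_le_mul_of_nonneg_left
        ((sum_le_sum fun k _ => mul_le_mul_of_nonneg_left (h i k) (hq' k)).trans_eq
          (by rw [← sum_mul, hq'1, one_mul])) (hq i)

theorem prod_one_sub_le_exp_neg_sum {ι : Type*} (s : Finset ι) {x : ι → ℝ}
    (hx : ∀ i ∈ s, x i ≤ 1) : ∏ i ∈ s, (1 - x i) ≤ Real.exp (-∑ i ∈ s, x i) := by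
  rw [← sum_neg_distrib, Real.exp_sum]
  exact prod_le_prod (fun i hi => sub_nonneg.2 (hx i hi)) fun i _ => Real.one_sub_le_exp_neg _

theorem le_prod_mul_of_forall_le_mul_pred {D c : ℕ → ℝ} {n : ℕ}
    (hc : ∀ i ∈ Icc 1 n, 0 ≤ c i) (hD : ∀ i ∈ Icc 1 n, D i ≤ c i * D (i - 1)) :
    D n ≤ (∏ i ∈ Icc 1 n, c i) * D 0 := by
  induction n with
  | zero => simp
  | succ n ih =>
    have hmem : n + 1 ∈ Icc 1 (n + 1) := mem_Icc.2 ⟨by omega, le_rfl⟩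
    have hsub : ∀ i ∈ Icc 1 n, i ∈ Icc 1 (n + 1) := fun i hi => Icc_subset_Icc_right (by omega) hi
    calc D (n + 1) ≤ c (n + 1) * D n := hD _ hmem
      _ ≤ c (n + 1) * ((∏ i ∈ Icc 1 n, c i) * D 0) :=
        mul_le_mul_of_nonneg_left (ih (fun i hi => hc i (hsub i hi)) fun i hi => hD i (hsub i hi))
          (hc _ hmem)
      _ = (∏ i ∈ Icc 1 (n + 1), c i) * D 0 := by rw [prod_Icc_succ_top (by omega)]; ring

theorem sub_le_one_sub_div_mul_sub {a r A A' B M : ℝ} (ha : 0 ≤ a) (hr : 0 < r)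
    (hgap : B ≤ A' + r * M) (hgain : a * M ≤ A - A') :
    B - A ≤ (1 - a / r) * (B - A') := by
  have hM : a * ((B - A') / r) ≤ a * M :=
    mul_le_mul_of_nonneg_left ((div_le_iff₀ hr).2 (by linarith)) ha
  calc B - A ≤ B - A' - a * ((B - A') / r) := by linarith
    _ = (1 - a / r) * (B - A') := by ring

theorem one_sub_exp_mul_le_of_gap_le {A M α : ℕ → ℝ} {B : ℝ} {r : ℕ} (hr : 0 < r)
    (hα : ∀ i ∈ Icc 1 r, 0 ≤ α i ∧ α i ≤ 1) (hA0 : 0 ≤ A 0) (hB : 0 ≤ B)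
    (hgap : ∀ n, B ≤ A n + r * M n) (hgain : ∀ i ∈ Icc 1 r, α i * M (i - 1) ≤ A i - A (i - 1)) :
    (1 - Real.exp (-((1 / r : ℝ) * ∑ i ∈ Icc 1 r, α i))) * B ≤ A r := by
  have hr' : (0 : ℝ) < r := by exact_mod_cast hr
  have hαr : ∀ i ∈ Icc 1 r, α i / r ≤ 1 := fun i hi =>
    div_le_one_of_le₀ ((hα i hi).2.trans (by exact_mod_cast hr)) hr'.le
  set ε := Real.exp (-((1 / r : ℝ) * ∑ i ∈ Icc 1 r, α i))
  set P := ∏ i ∈ Icc 1 r, (1 - α i / r)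
  have hP : 0 ≤ P := prod_nonneg fun i hi => sub_nonneg.2 (hαr i hi)
  have hPε : P ≤ ε := by
    convert prod_one_sub_le_exp_neg_sum _ hαr using 3
    rw [← sum_div, one_div_mul_eq_div]
  have hdecay : B - A r ≤ P * (B - A 0) :=
    le_prod_mul_of_forall_le_mul_pred (fun i hi => sub_nonneg.2 (hαr i hi)) fun i hi =>
      sub_le_one_sub_div_mul_sub (hα i hi).1 hr' (hgap _) (hgain i hi)
  have hε : 0 ≤ ε := (Real.exp_pos _).le
  have hεB : 0 ≤ ε * B := mul_nonneg hε hB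
  rcases le_or_gt (A 0) B with hAB | hAB
  · have := mul_le_mul_of_nonneg_right hPε (sub_nonneg.2 hAB)
    nlinarith [mul_nonneg hε hA0]
  · nlinarith [mul_nonpos_of_nonneg_of_nonpos hP (sub_nonpos.2 hAB.le)]

theorem randomized_greedy_expected_approx_general {E O : Type*} [Fintype E] [Fintype O]
    [DecidableEq E] [Nonempty E] {Ωr Ωr' : Type*} [Fintype Ωr] [Fintype Ωr']
    (p : (E → O) → ℝ) (hp : ∀ φ, 0 ≤ p φ)
    (f : Finset E → (E → O) → ℝ) (hf : ∀ S φ, 0 ≤ f S φ)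
    (hmono : AdaptiveMonotone p f) (hsub : AdaptiveSubmodular p f)
    (q : Ωr → ℝ) (hq : ∀ ω, 0 ≤ q ω) (hq1 : ∑ ω : Ωr, q ω = 1)
    (q' : Ωr' → ℝ) (hq' : ∀ ω, 0 ≤ q' ω) (hq'1 : ∑ ω : Ωr', q' ω = 1)
    (Pag : Ωr → Policy E O) (Pstar : Ωr' → Policy E O)
    (r : ℕ) (hr : 0 < r) (α : ℕ → ℝ) (hα : ∀ i ∈ Finset.Icc 1 r, 0 ≤ α i ∧ α i ≤ 1)
    (hgreedy : ∀ i ∈ Finset.Icc 1 r, ∀ φ : E → O, ∀ ψ : PReal E O,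
      α i * maxMarginal p f ψ *
          (∑ ω ∈ Finset.univ.filter (fun ω : Ωr => runP (Pag ω) φ (i - 1) = ψ), q ω)
        ≤ ∑ ω ∈ Finset.univ.filter (fun ω : Ωr => runP (Pag ω) φ (i - 1) = ψ),
            q ω * marginal p f (Pag ω ψ) ψ) :
    (1 - Real.exp (-((1 / r : ℝ) * ∑ i ∈ Finset.Icc 1 r, α i))) *
        (∑ ω' : Ωr', q' ω' * favg p f (Pstar ω') r)
      ≤ ∑ ω : Ωr, q ω * favg p f (Pag ω) r := by
  refine one_sub_exp_mul_le_of_gap_le (A := fun n => ∑ ω, q ω * favg p f (Pag ω) n)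
    (M := fun n => ∑ ω, q ω * avgMaxMarginal p f (Pag ω) n) hr hα
    (sum_nonneg fun ω _ => mul_nonneg (hq ω) (favg_nonneg hp hf _ 0))
    (sum_nonneg fun ω' _ => mul_nonneg (hq' ω') (favg_nonneg hp hf _ r))
    (fun n => ?gap) fun i hi => ?gain
  case gap =>
    calc ∑ ω', q' ω' * favg p f (Pstar ω') r
        ≤ ∑ ω, q ω * (favg p f (Pag ω) n + r * avgMaxMarginal p f (Pag ω) n) :=
          sum_mul_le_sum_mul_of_forall_le hq hq1 hq' hq'1 fun ω ω' =>
            favg_le_favg_add_mul_avgMaxMarginal hp hmono hsub (Pag ω) (Pstar ω') n r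
      _ = _ := by simp only [mul_add, sum_add_distrib, mul_sum, mul_left_comm]
  case gain =>
    have := mul_sum_avgMaxMarginal_le_of_greedy hp q Pag (i - 1) (α i) (hgreedy i hi)
    rwa [Nat.sub_add_cancel (mem_Icc.1 hi).1] at this

/-- (Theorem 1) If `f` is adaptive monotone and adaptive submodular and the randomized
policy `π^ag` is an expected `α_i`-approximate greedy policy at each round `i = 1, ..., r`
(conditionally on the history), then
`E_ω[f_avg(π^ag(ω))] ≥ (1 − e^{−α})·E_ω[f_avg(π*(ω))]` for every randomized policy `π*`
selecting at most `r` items, where `α = (1/r) Σ_{i=1}^r α_i`. -/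
theorem randomized_greedy_expected_approx {E O : Type*} [Fintype E] [Fintype O]
    [DecidableEq E] [Nonempty E] {Ωr Ωr' : Type*} [Fintype Ωr] [Fintype Ωr']
    (p : (E → O) → ℝ) (hp : ∀ φ, 0 ≤ p φ) (hp1 : ∑ φ : E → O, p φ = 1)
    (f : Finset E → (E → O) → ℝ) (hf : ∀ S φ, 0 ≤ f S φ)
    (hmono : AdaptiveMonotone p f) (hsub : AdaptiveSubmodular p f)
    (q : Ωr → ℝ) (hq : ∀ ω, 0 ≤ q ω) (hq1 : ∑ ω : Ωr, q ω = 1)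
    (q' : Ωr' → ℝ) (hq' : ∀ ω, 0 ≤ q' ω) (hq'1 : ∑ ω : Ωr', q' ω = 1)
    (Pag : Ωr → Policy E O) (Pstar : Ωr' → Policy E O)
    (r : ℕ) (hr : 0 < r) (α : ℕ → ℝ) (hα : ∀ i ∈ Finset.Icc 1 r, 0 ≤ α i ∧ α i ≤ 1)
    (hgreedy : ∀ i ∈ Finset.Icc 1 r, ∀ φ : E → O, ∀ ψ : PReal E O,
      α i * maxMarginal p f ψ *
          (∑ ω ∈ Finset.univ.filter (fun ω : Ωr => runP (Pag ω) φ (i - 1) = ψ), q ω)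
        ≤ ∑ ω ∈ Finset.univ.filter (fun ω : Ωr => runP (Pag ω) φ (i - 1) = ψ),
            q ω * marginal p f (Pag ω ψ) ψ) :
    (1 - Real.exp (-((1 / r : ℝ) * ∑ i ∈ Finset.Icc 1 r, α i))) *
        (∑ ω' : Ωr', q' ω' * favg p f (Pstar ω') r)
      ≤ ∑ ω : Ωr, q ω * favg p f (Pag ω) r :=
  randomized_greedy_expected_approx_general p hp f hf hmono hsub q hq hq1 q' hq' hq'1 Pag Pstar r hr
    α hα hgreedy
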